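/- arXiv:2102.02939 — 7 statements merged into one kernel-verified Lean document; each statement's English description precedes it below -/
import Mathlib

section
/- Let & be a continuous t-norm on [0,1] and let p be an idempotent element (p & p = p). Then for all x, y in [0,1] with x ≤ p ≤ y, one has x & y = min(x, y). -/
open unitInterval

instance : Fact ((0:ℝ) ≤ 1) := ⟨zero_le_one⟩

/-- If `p` is an idempotent element of a continuous t-norm `&` on `[0,1]`,
then `x & y = min x y` whenever `x ≤ p ≤ y`. -/
theorem stmt_0 (mul : I → I → I)
    (hcont : Continuous fun p : I × I => mul p.1 p.2)
    (hcomm : ∀ a b, mul a b = mul b a)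
    (hassoc : ∀ a b c, mul (mul a b) c = mul a (mul b c))
    (hmono : ∀ a, Monotone (mul a))
    (hunit : ∀ a, mul 1 a = a)
    (p : I) (hp : mul p p = p)
    (x y : I) (hxp : x ≤ p) (hpy : p ≤ y) :
    mul x y = min x y := by
  have hle : ∀ a b : I, mul a b ≤ b := by
    intro a b
    calc mul a b ≤ mul 1 b := by
          rw [hcomm a b, hcomm 1 b]; exact hmono b le_one'
      _ = b := hunit b
  -- find z with mul z p = x
  have hcf : Continuous fun t : I => mul t p :=
    hcont.comp (Continuous.prodMk continuous_id continuous_const)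
  have h0 : mul 0 p = 0 := le_antisymm (by rw [hcomm]; exact hle p 0) nonneg'
  have h1 : mul 1 p = p := hunit p
  obtain ⟨z, hz⟩ : ∃ z, mul z p = x := by
    have := intermediate_value_univ (0 : I) 1 hcf
    have hx : x ∈ Set.Icc (mul 0 p) (mul 1 p) := by
      rw [h0, h1]; exact ⟨nonneg', hxp⟩
    exact this hx
  have hxpx : mul x p = x := by
    calc mul x p = mul (mul z p) p := by rw [hz]
      _ = mul z (mul p p) := hassoc z p p
      _ = x := by rw [hp, hz]
  have h2 : x ≤ mul x y := by
    calc x = mul x p := hxpx.symm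
      _ ≤ mul x y := hmono x hpy
  have h3 : mul x y ≤ x := by rw [hcomm]; exact hle y x
  rw [min_eq_left (le_trans hxp hpy)]
  exact le_antisymm h3 h2
end

section
/- Let & be a continuous t-norm on [0,1] with residuated implication → defined by x → y = sup{z | x & z ≤ y}. If p is an idempotent element of & and x < p ≤ y, then y → x = x. -/
open unitInterval

/-- For a continuous t-norm `&` on `[0,1]` with residuated implication
`x → y = sup {z | x & z ≤ y}`, if `p` is idempotent and `x < p ≤ y`,
then `y → x = x`. -/
theorem stmt_1 (mul : I → I → I) (imp : I → I → I)
    (hcont : Continuous fun p : I × I => mul p.1 p.2)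
    (hcomm : ∀ a b, mul a b = mul b a)
    (hassoc : ∀ a b c, mul (mul a b) c = mul a (mul b c))
    (hmono : ∀ a, Monotone (mul a))
    (hunit : ∀ a, mul 1 a = a)
    (himp : ∀ a b, imp a b = sSup {z : I | mul a z ≤ b})
    (p : I) (hp : mul p p = p)
    (x y : I) (hxp : x < p) (hpy : p ≤ y) :
    imp y x = x := by
  -- monotonicity in the first argument
  have hmono1 : ∀ a b c : I, a ≤ b → mul a c ≤ mul b c := by
    intro a b c h
    rw [hcomm a c, hcomm b c]; exact hmono c h
  have hle : ∀ a b : I, mul a b ≤ b := by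
    intro a b
    calc mul a b ≤ mul 1 b := hmono1 a 1 b le_one'
    _ = b := hunit b
  -- idempotent p absorbs smaller elements
  have hidem : ∀ z : I, z ≤ p → mul p z = z := by
    intro z hz
    have hfc : Continuous (fun t : I => mul p t) :=
      hcont.comp (continuous_const.prodMk continuous_id)
    have h0 : mul p 0 = 0 := le_antisymm (hle p 0) nonneg'
    have h1 : mul p 1 = p := by rw [hcomm, hunit]
    have hmem : z ∈ Set.Icc (mul p 0) (mul p 1) := by
      rw [h0, h1]; exact ⟨nonneg', hz⟩
    obtain ⟨b, -, hb⟩ := intermediate_value_Icc (zero_le_one' I) hfc.continuousOn hmem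
    replace hb : mul p b = z := hb
    calc mul p z = mul p (mul p b) := by rw [hb]
    _ = mul (mul p p) b := (hassoc p p b).symm
    _ = mul p b := by rw [hp]
    _ = z := hb
  rw [himp]
  apply le_antisymm
  · apply sSup_le
    intro z hz
    rcases le_or_gt p z with h | h
    · exfalso
      have : p ≤ x := by
        calc p = mul p p := hp.symm
        _ ≤ mul p z := hmono p h
        _ ≤ mul y z := hmono1 p y z hpy
        _ ≤ x := hz
      exact absurd (lt_of_lt_of_le hxp this) (lt_irrefl _)
    · calc z = mul p z := (hidem z h.le).symm
      _ ≤ mul y z := hmono1 p y z hpy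
      _ ≤ x := hz
  · exact le_sSup (hle y x)
end

section
/- Let Q be a linearly ordered commutative unital quantale. Then the map δ_K: Q × 2^Q → Q defined by δ_K(x, A) = (inf A) → x for nonempty A and δ_K(x, ∅) = 0 is a Q-approach structure on Q; that is, it satisfies: (A1) δ_K(x, {x}) ≥ k; (A2) δ_K(x, ∅) = 0; (A3) δ_K(x, A ∪ B) = δ_K(x, A) ∨ δ_K(x, B); (A4) δ_K(x, A) ≥ (inf over b ∈ B of δ_K(b, A)) & δ_K(x, B). -/
open scoped Classical

/-- The canonical `Q`-approach structure `δ_K` on a linearly ordered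
commutative unital quantale `Q`. -/
noncomputable def dK {Q : Type*} [CompleteLinearOrder Q]
    (imp : Q → Q → Q) (x : Q) (A : Set Q) : Q :=
  if A.Nonempty then imp (sInf A) x else ⊥

/-- For a linearly ordered commutative unital quantale `Q`, the map `δ_K`
is a `Q`-approach structure on `Q` (axioms (A1)–(A4)). -/
theorem stmt_10 {Q : Type*} [CompleteLinearOrder Q]
    (mul : Q → Q → Q) (k : Q) (imp : Q → Q → Q)
    (hcomm : ∀ a b, mul a b = mul b a)
    (hassoc : ∀ a b c, mul (mul a b) c = mul a (mul b c))
    (hunit : ∀ a, mul k a = a)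
    (hdist : ∀ (a : Q) (S : Set Q), mul a (sSup S) = ⨆ b ∈ S, mul a b)
    (hadj : ∀ p q r, mul p q ≤ r ↔ q ≤ imp p r) :
    (∀ x : Q, k ≤ dK imp x {x}) ∧
      (∀ x : Q, dK imp x (∅ : Set Q) = ⊥) ∧
      (∀ (x : Q) (A B : Set Q), dK imp x (A ∪ B) = dK imp x A ⊔ dK imp x B) ∧
      (∀ (x : Q) (A B : Set Q),
        mul (⨅ b ∈ B, dK imp b A) (dK imp x B) ≤ dK imp x A) := by
  -- basic monotonicity of mul in the second argument
  have hmono2 : ∀ c a a' : Q, a ≤ a' → mul c a ≤ mul c a' := by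
    intro c a a' h
    exact (hadj c a (mul c a')).mpr (le_trans h ((hadj c a' (mul c a')).mp le_rfl))
  have hmono1 : ∀ c c' a : Q, c ≤ c' → mul c a ≤ mul c' a := by
    intro c c' a h
    rw [hcomm c a, hcomm c' a]; exact hmono2 a c c' h
  -- imp antitone in first argument
  have himp : ∀ p p' r : Q, p ≤ p' → imp p' r ≤ imp p r := by
    intro p p' r h
    refine (hadj p (imp p' r) r).mp ?_
    exact le_trans (hmono1 p p' _ h) ((hadj p' (imp p' r) r).mpr le_rfl)
  have hbot : ∀ a : Q, mul a ⊥ = ⊥ := by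
    intro a
    have := hdist a (∅ : Set Q)
    simpa using this
  refine ⟨?_, ?_, ?_, ?_⟩
  · intro x
    have : mul x k ≤ x := by rw [hcomm, hunit]
    have := (hadj x k x).mp this
    simpa [dK] using this
  · intro x; simp [dK]
  · intro x A B
    rcases A.eq_empty_or_nonempty with rfl | hA
    · simp [dK]
    rcases B.eq_empty_or_nonempty with rfl | hB
    · simp [dK]
    have hAB : (A ∪ B).Nonempty := hA.mono Set.subset_union_left
    have hinf : sInf (A ∪ B) = sInf A ⊓ sInf B := by
      rw [sInf_union]
    simp only [dK, if_pos hA, if_pos hB, if_pos hAB, hinf]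
    rcases le_total (sInf A) (sInf B) with h | h
    · rw [inf_eq_left.mpr h]
      exact le_antisymm (le_sup_left) (sup_le le_rfl (himp _ _ _ h))
    · rw [inf_eq_right.mpr h]
      exact le_antisymm (le_sup_right) (sup_le (himp _ _ _ h) le_rfl)
  · intro x A B
    rcases B.eq_empty_or_nonempty with rfl | hB
    · simp only [dK, Set.not_nonempty_empty, if_false]
      rw [hbot]
      exact bot_le
    rcases A.eq_empty_or_nonempty with rfl | hA
    · have : (⨅ b ∈ B, dK imp b (∅ : Set Q)) = ⊥ := by
        obtain ⟨b, hb⟩ := hB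
        refine le_antisymm ?_ bot_le
        refine le_trans (iInf_le _ b) ?_
        refine le_trans (iInf_le _ hb) ?_
        simp [dK]
      rw [this, hcomm, hbot]
      exact bot_le
    simp only [dK, if_pos hA, if_pos hB]
    refine (hadj _ _ _).mp ?_
    rw [← hassoc]
    have h1 : mul (sInf A) (⨅ b ∈ B, imp (sInf A) b) ≤ sInf B := by
      refine le_sInf fun b hb => ?_
      refine (hadj _ _ _).mpr ?_
      refine le_trans (iInf_le _ b) (le_trans (iInf_le _ hb) ?_)
      exact le_rfl
    calc mul (mul (sInf A) (⨅ b ∈ B, imp (sInf A) b)) (imp (sInf B) x)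
        ≤ mul (sInf B) (imp (sInf B) x) := hmono1 _ _ _ h1
      _ ≤ x := (hadj _ _ _).mpr le_rfl
end

section
/- Let Q be a linearly ordered commutative unital quantale, and let (X, δ) be a Q-approach space. If λ, μ: (X, δ) → (Q, δ_K) are both continuous, then so is λ ∨ μ (pointwise join), where δ_K(x, A) = (inf A) → x for nonempty A and 0 otherwise. -/
open scoped Classical

/-- For a linearly ordered commutative unital quantale `Q` and a
`Q`-approach space `(X,δ)`, the pointwise join of two continuous maps
`λ, μ : (X,δ) → (Q,δ_K)` is continuous. -/
theorem stmt_12 {Q X : Type*} [CompleteLinearOrder Q]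
    (mul : Q → Q → Q) (k : Q) (imp : Q → Q → Q)
    (hcomm : ∀ a b, mul a b = mul b a)
    (hassoc : ∀ a b c, mul (mul a b) c = mul a (mul b c))
    (hunit : ∀ a, mul k a = a)
    (hdist : ∀ (a : Q) (S : Set Q), mul a (sSup S) = ⨆ b ∈ S, mul a b)
    (hadj : ∀ p q r, mul p q ≤ r ↔ q ≤ imp p r)
    (δ : X → Set X → Q)
    (hA1 : ∀ x, k ≤ δ x {x})
    (hA2 : ∀ x, δ x (∅ : Set X) = ⊥)
    (hA3 : ∀ x A B, δ x (A ∪ B) = δ x A ⊔ δ x B)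
    (hA4 : ∀ x A B, mul (⨅ b ∈ B, δ b A) (δ x B) ≤ δ x A)
    (lam mu : X → Q)
    (hlam : ∀ (x : X) (A : Set X), δ x A ≤ dK imp (lam x) (lam '' A))
    (hmu : ∀ (x : X) (A : Set X), δ x A ≤ dK imp (mu x) (mu '' A)) :
    ∀ (x : X) (A : Set X),
      δ x A ≤ dK imp (lam x ⊔ mu x) ((fun y => lam y ⊔ mu y) '' A) := by
  -- auxiliary facts
  have hbot : ∀ a : Q, mul a ⊥ = ⊥ := by
    intro a
    have := hdist a ∅
    simpa using this
  have hsup : ∀ a b c : Q, mul a (b ⊔ c) = mul a b ⊔ mul a c := by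
    intro a b c
    have := hdist a {b, c}
    simpa [sSup_pair, iSup_or, iSup_sup_eq] using this
  have hmono : ∀ a b c : Q, a ≤ b → mul a c ≤ mul b c := by
    intro a b c hab
    have h1 : mul c b = mul c a ⊔ mul c b := by
      have := hsup c a b
      rw [sup_eq_right.mpr hab] at this
      exact this
    calc mul a c = mul c a := hcomm a c
      _ ≤ mul c b := by rw [h1]; exact le_sup_left
      _ = mul b c := hcomm c b
  intro x A
  by_cases hA : A.Nonempty
  · have himg : ((fun y => lam y ⊔ mu y) '' A).Nonempty := hA.image _
    rw [dK, if_pos himg, ← hadj]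
    set s := sInf ((fun y => lam y ⊔ mu y) '' A) with hs
    set A1 : Set X := {a ∈ A | lam a ≤ mu a} with hA1'
    set A2 : Set X := {a ∈ A | mu a ≤ lam a} with hA2'
    have hAu : A = A1 ∪ A2 := by
      ext a
      simp only [hA1', hA2', Set.mem_union, Set.mem_setOf_eq]
      constructor
      · intro ha
        rcases le_total (lam a) (mu a) with h | h
        · exact Or.inl ⟨ha, h⟩
        · exact Or.inr ⟨ha, h⟩
      · rintro (⟨ha, _⟩ | ⟨ha, _⟩) <;> exact ha
    -- generic claim
    have key : ∀ (h : X → Q) (B : Set X),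
        B ⊆ A → (∀ a ∈ B, lam a ⊔ mu a ≤ h a) →
        (∀ (x : X) (C : Set X), δ x C ≤ dK imp (h x) (h '' C)) →
        mul s (δ x B) ≤ h x := by
      intro h B hBA hgh hcont
      by_cases hB : B.Nonempty
      · have hc := hcont x B
        rw [dK, if_pos (hB.image _)] at hc
        have h2 : mul (sInf (h '' B)) (δ x B) ≤ h x := (hadj _ _ _).mpr hc
        have hsle : s ≤ sInf (h '' B) := by
          apply le_sInf
          rintro b ⟨a, haB, rfl⟩
          have h3 : s ≤ lam a ⊔ mu a := sInf_le ⟨a, hBA haB, rfl⟩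
          exact le_trans h3 (hgh a haB)
        exact le_trans (hmono _ _ _ hsle) h2
      · have hBempty : B = ∅ := Set.not_nonempty_iff_eq_empty.mp hB
        rw [hBempty, hA2 x, hbot]
        exact bot_le
    have k1 : mul s (δ x A1) ≤ mu x := by
      apply key mu A1 (fun a ha => ha.1)
      · rintro a ⟨_, hle⟩
        exact sup_le hle le_rfl
      · exact hmu
    have k2 : mul s (δ x A2) ≤ lam x := by
      apply key lam A2 (fun a ha => ha.1)
      · rintro a ⟨_, hle⟩
        exact sup_le le_rfl hle
      · exact hlam
    calc mul s (δ x A) = mul s (δ x A1 ⊔ δ x A2) := by rw [hAu, hA3]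
      _ = mul s (δ x A1) ⊔ mul s (δ x A2) := hsup _ _ _
      _ ≤ lam x ⊔ mu x := sup_le (le_trans k1 le_sup_right) (le_trans k2 le_sup_left)
  · have : A = ∅ := Set.not_nonempty_iff_eq_empty.mp hA
    rw [this, hA2 x]
    exact bot_le
end

section
/- Let Q be a linearly ordered commutative unital quantale, (X, δ) a Q-approach space, λ: (X, δ) → (Q, δ_K) a continuous map, and p ∈ Q. Then p → λ (pointwise) is also continuous from (X, δ) to (Q, δ_K). -/
open scoped Classical

/-- For a linearly ordered commutative unital quantale `Q`, a `Q`-approach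
space `(X,δ)`, a continuous map `λ : (X,δ) → (Q,δ_K)` and `p ∈ Q`, the map
`p → λ` is continuous. -/
theorem stmt_13 {Q X : Type*} [CompleteLinearOrder Q]
    (mul : Q → Q → Q) (k : Q) (imp : Q → Q → Q)
    (hcomm : ∀ a b, mul a b = mul b a)
    (hassoc : ∀ a b c, mul (mul a b) c = mul a (mul b c))
    (hunit : ∀ a, mul k a = a)
    (hdist : ∀ (a : Q) (S : Set Q), mul a (sSup S) = ⨆ b ∈ S, mul a b)
    (hadj : ∀ p q r, mul p q ≤ r ↔ q ≤ imp p r)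
    (δ : X → Set X → Q)
    (hA1 : ∀ x, k ≤ δ x {x})
    (hA2 : ∀ x, δ x (∅ : Set X) = ⊥)
    (hA3 : ∀ x A B, δ x (A ∪ B) = δ x A ⊔ δ x B)
    (hA4 : ∀ x A B, mul (⨅ b ∈ B, δ b A) (δ x B) ≤ δ x A)
    (lam : X → Q) (p : Q)
    (hlam : ∀ (x : X) (A : Set X), δ x A ≤ dK imp (lam x) (lam '' A)) :
    ∀ (x : X) (A : Set X),
      δ x A ≤ dK imp (imp p (lam x)) ((fun y => imp p (lam y)) '' A) := by
  intro x A
  rcases A.eq_empty_or_nonempty with rfl | hA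
  · simp [hA2]
  · have hmono : ∀ a b c : Q, b ≤ c → mul a b ≤ mul a c := by
      intro a b c h
      have hd := hdist a {b, c}
      rw [sSup_pair, sup_eq_right.mpr h] at hd
      rw [hd]
      exact le_biSup (fun x => mul a x) (Set.mem_insert b {c})
    set S := lam '' A with hSdef
    have hS : S.Nonempty := hA.image _
    have hS' : ((fun y => imp p (lam y)) '' A) = imp p '' S := by
      rw [hSdef, Set.image_image]
    have key : dK imp (lam x) S ≤ dK imp (imp p (lam x)) (imp p '' S) := by
      rw [dK, dK, if_pos hS, if_pos (hS.image _)]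
      set a := sInf S with ha
      set a' := sInf (imp p '' S) with ha'
      have h1 : mul p a' ≤ a := by
        rw [ha]
        apply le_sInf
        intro s hs
        exact (hadj p a' s).mpr (sInf_le (Set.mem_image_of_mem _ hs))
      rw [← hadj, ← hadj]
      calc mul p (mul a' (imp a (lam x)))
          = mul (mul p a') (imp a (lam x)) := (hassoc _ _ _).symm
        _ ≤ mul a (imp a (lam x)) := by
            rw [hcomm, hcomm a]; exact hmono _ _ _ h1
        _ ≤ lam x := (hadj a _ _).mpr le_rfl
    calc δ x A ≤ dK imp (lam x) S := hlam x A
      _ ≤ _ := by rw [hS']; exact key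
end

section
/- Let & be a continuous t-norm on [0,1] with residuum →. Then the map d: [0,1] → ([0,1] → [0,1]) sending t to the function x ↦ (t → x) if t = 1 and x ↦ sup over b > t of (b → x) if t < 1, preserves the [0,1]-order α_R, in the sense that for all s, t with t < s < 1: s → t ≤ inf over x ∈ [0,1] of ((sup over a > t of (a → x)) → (sup over b > s of (b → x))). -/
/-!
For `a > t` we have `(s → t) & s ≤ t < a`, so by continuity of `&` also `(s → t) & b < a` for
some `b > s`. Then `b & (s → t) & (a → x) ≤ a & (a → x) ≤ x`, i.e.
`(s → t) & (a → x) ≤ b → x ≤ ⨆ b > s, b → x`, and residuation turns this bound, uniform in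
`a > t`, into the claimed inequality.
-/

open unitInterval

open Topology

section Residuated

variable {mul imp : I → I → I}

theorem mul_imp_le (hadj : ∀ p q r, mul p q ≤ r ↔ q ≤ imp p r) (p r : I) :
    mul p (imp p r) ≤ r :=
  (hadj p _ r).mpr le_rfl

theorem le_imp_comm (hcomm : ∀ a b, mul a b = mul b a)
    (hadj : ∀ p q r, mul p q ≤ r ↔ q ≤ imp p r) {p q r : I} :
    q ≤ imp p r ↔ p ≤ imp q r := by
  rw [← hadj, hcomm, hadj]

theorem exists_gt_mul_imp_le_imp (hcont : Continuous fun p : I × I => mul p.1 p.2)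
    (hcomm : ∀ a b, mul a b = mul b a)
    (hassoc : ∀ a b c, mul (mul a b) c = mul a (mul b c))
    (hmono : ∀ a, Monotone (mul a))
    (hadj : ∀ p q r, mul p q ≤ r ↔ q ≤ imp p r)
    {s t a : I} (hs : s < 1) (hta : t < a) (x : I) :
    ∃ b > s, mul (imp s t) (imp a x) ≤ imp b x := by
  have hs_lt : mul (imp s t) s < a := by
    rw [hcomm]
    exact (mul_imp_le hadj s t).trans_lt hta
  have : (𝓝[>] s).NeBot := nhdsGT_neBot_of_exists_gt ⟨1, hs⟩
  obtain ⟨b, hsb, hb⟩ : ∃ b > s, mul (imp s t) b < a :=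
    ((hcont.comp (continuous_const.prodMk continuous_id)).continuousAt.eventually_lt
      continuousAt_const hs_lt).exists_gt
  refine ⟨b, hsb, (hadj _ _ _).mp ?_⟩
  calc mul b (mul (imp s t) (imp a x))
      = mul (imp a x) (mul (imp s t) b) := by rw [← hassoc, hcomm b, hcomm]
    _ ≤ mul (imp a x) a := hmono _ hb.le
    _ ≤ x := by rw [hcomm]; exact mul_imp_le hadj a x

end Residuated

theorem stmt_14_general (mul : I → I → I) (imp : I → I → I)
    (hcont : Continuous fun p : I × I => mul p.1 p.2)
    (hcomm : ∀ a b, mul a b = mul b a)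
    (hassoc : ∀ a b c, mul (mul a b) c = mul a (mul b c))
    (hmono : ∀ a, Monotone (mul a))
    (hadj : ∀ p q r, mul p q ≤ r ↔ q ≤ imp p r) :
    ∀ s t : I, t < s → s < 1 →
      imp s t ≤ ⨅ x : I,
        imp (⨆ a : {a : I // t < a}, imp a x) (⨆ b : {b : I // s < b}, imp b x) := by
  intro s t _ hs
  refine le_iInf fun x => (le_imp_comm hcomm hadj).mpr <| iSup_le fun ⟨a, hta⟩ => ?_
  obtain ⟨b, hsb, hb⟩ := exists_gt_mul_imp_le_imp hcont hcomm hassoc hmono hadj hs hta x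
  exact (hadj _ _ _).mp <| hb.trans <| le_iSup (fun b : {b : I // s < b} => imp b x) ⟨b, hsb⟩

/-- Key inequality showing that `d : t ↦ ⋁_{b > t} (b → -)` preserves the
`[0,1]`-order `α_R`: for a continuous t-norm `&` on `[0,1]` with residuum
`→`, and all `t < s < 1`,
`s → t ≤ ⨅ x, ((⨆ a > t, a → x) → (⨆ b > s, b → x))`. -/
theorem stmt_14 (mul : I → I → I) (imp : I → I → I)
    (hcont : Continuous fun p : I × I => mul p.1 p.2)
    (hcomm : ∀ a b, mul a b = mul b a)
    (hassoc : ∀ a b c, mul (mul a b) c = mul a (mul b c))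
    (hmono : ∀ a, Monotone (mul a))
    (hunit : ∀ a, mul 1 a = a)
    (hadj : ∀ p q r, mul p q ≤ r ↔ q ≤ imp p r) :
    ∀ s t : I, t < s → s < 1 →
      imp s t ≤ ⨅ x : I,
        imp (⨆ a : {a : I // t < a}, imp a x) (⨆ b : {b : I // s < b}, imp b x) :=
  stmt_14_general mul imp hcont hcomm hassoc hmono hadj
end

section
/- Let & be a continuous t-norm that admits idempotent elements p, q with 0 < p < q such that the restriction of & to [p,q] is isomorphic (as a quantale) to the Łukasiewicz t-norm on [0,1]. Then for any t ∈ (p, q), sup over b < p of (t → b) = p, and p < t → p; consequently the map d: t ↦ (x ↦ sup over b < t of (x → b)) fails the inequality t → p ≤ inf over x of ((x → t) → sup over b < p of (x → b)). -/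
open unitInterval

/-- Suppose `&` is a continuous t-norm on `[0,1]` with residuum `→`, and
`p < q` are idempotent elements with `0 < p` such that the restriction of
`&` to `[p,q]` is isomorphic, as a quantale, to the Łukasiewicz t-norm
(witnessed by an order isomorphism `g : [p,q] → [0,1]`).  Then for any
`t ∈ (p,q)`:  `⋁_{b < p} (t → b) = p`, `p < t → p`, and consequently the
map `d : t ↦ (x ↦ ⋁_{b < t} (x → b))` fails the order-preservation
inequality `t → p ≤ ⨅ x, ((x → t) → ⋁_{b < p} (x → b))`. -/
theorem stmt_16 (mul : I → I → I) (imp : I → I → I)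
    (hcont : Continuous fun p : I × I => mul p.1 p.2)
    (hcomm : ∀ a b, mul a b = mul b a)
    (hassoc : ∀ a b c, mul (mul a b) c = mul a (mul b c))
    (hmono : ∀ a, Monotone (mul a))
    (hunit : ∀ a, mul 1 a = a)
    (hadj : ∀ p' q' r, mul p' q' ≤ r ↔ q' ≤ imp p' r)
    (p q : I) (hp : mul p p = p) (hq : mul q q = q)
    (hp0 : 0 < p) (hpq : p < q)
    -- the block `[p,q]` is isomorphic to the Łukasiewicz quantale:
    (g : I → ℝ)
    (hgmono : StrictMonoOn g (Set.Icc p q))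
    (hgsurj : g '' Set.Icc p q = Set.Icc (0:ℝ) 1)
    (hgp : g p = 0) (hgq : g q = 1)
    (hghom : ∀ a ∈ Set.Icc p q, ∀ b ∈ Set.Icc p q,
      g (mul a b) = max 0 (g a + g b - 1)) :
    ∀ t : I, p < t → t < q →
      (⨆ b : {b : I // b < p}, imp t b) = p ∧
      p < imp t p ∧
      ¬ (imp t p ≤ ⨅ x : I, imp (imp x t) (⨆ b : {b : I // b < p}, imp x b)) := by
  intro t hpt htq
  -- basic facts
  have himp_le : ∀ a r, mul a (imp a r) ≤ r := fun a r => (hadj a (imp a r) r).mpr le_rfl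
  have hmul_le_left : ∀ a b : I, mul a b ≤ b := by
    intro a b
    calc mul a b = mul b a := hcomm a b
    _ ≤ mul b 1 := hmono b le_one'
    _ = b := by rw [hcomm, hunit]
  have hmono' : ∀ c a b : I, a ≤ b → mul a c ≤ mul b c := by
    intro c a b h
    rw [hcomm a c, hcomm b c]; exact hmono c h
  -- `mul p x = x` for `x ≤ p` (uses continuity + idempotency)
  have hmulp : ∀ x : I, x ≤ p → mul p x = x := by
    intro x hx
    have h0 : mul p 0 = 0 := by
      refine le_antisymm ?_ nonneg'
      calc mul p 0 = mul 0 p := hcomm p 0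
      _ ≤ mul 0 1 := hmono 0 le_one'
      _ = 0 := by rw [hcomm, hunit]
    have hcp : Continuous fun y : I => mul p y :=
      hcont.comp (continuous_const.prodMk continuous_id)
    have hx' : x ∈ Set.Icc (mul p 0) (mul p 1) := by
      rw [h0]
      constructor
      · exact nonneg'
      · rw [hcomm, hunit]; exact hx
    obtain ⟨y, hy⟩ := intermediate_value_univ (0 : I) 1 hcp hx'
    have hy' : mul p y = x := hy
    calc mul p x = mul p (mul p y) := by rw [hy']
    _ = mul (mul p p) y := (hassoc p p y).symm
    _ = mul p y := by rw [hp]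
    _ = x := hy'
  -- `imp t b = b` for `b < p`
  have himpb : ∀ b : I, b < p → imp t b = b := by
    intro b hb
    refine le_antisymm ?_ ((hadj t b b).mp (hmul_le_left t b))
    rcases le_or_gt (imp t b) p with hc | hc
    · have h1 : mul p (imp t b) ≤ mul t (imp t b) := hmono' _ p t hpt.le
      have h2 : mul p (imp t b) = imp t b := hmulp _ hc
      calc imp t b = mul p (imp t b) := h2.symm
      _ ≤ mul t (imp t b) := h1
      _ ≤ b := himp_le t b
    · exfalso
      have h1 : p ≤ mul t (imp t b) := by
        calc p = mul p p := hp.symm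
        _ ≤ mul p (imp t b) := hmono p hc.le
        _ ≤ mul t (imp t b) := hmono' _ p t hpt.le
      exact absurd (h1.trans (himp_le t b)) (not_le.mpr hb)
  -- the supremum over `b < p` is `p`
  have hsup : (⨆ b : {b : I // b < p}, imp t b) = p := by
    refine le_antisymm (iSup_le fun b => ?_) ?_
    · rw [himpb b.1 b.2]; exact b.2.le
    · by_contra h
      push_neg at h
      set S := ⨆ b : {b : I // b < p}, imp t b with hS
      -- pick a midpoint between S and p
      have hS0 : (0:ℝ) ≤ (S : ℝ) := S.2.1
      have hp1 : (p : ℝ) ≤ 1 := p.2.2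
      have hSp : (S : ℝ) < (p : ℝ) := h
      set m : ℝ := ((S : ℝ) + (p : ℝ)) / 2 with hm
      have hm0 : (0:ℝ) ≤ m := by simp only [hm]; linarith
      have hm1 : m ≤ 1 := by
        have : m ≤ (p : ℝ) := by linarith
        linarith
      have hmltp : (⟨m, hm0, hm1⟩ : I) < p := by
        change m < (p : ℝ)
        simp only [hm]; linarith
      have hSm : S < (⟨m, hm0, hm1⟩ : I) := by
        change (S : ℝ) < m
        simp only [hm]; linarith
      have : imp t (⟨m, hm0, hm1⟩ : I) ≤ S := by
        have h' := le_iSup (fun b : {b : I // b < p} => imp t b.1)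
          (⟨⟨m, hm0, hm1⟩, hmltp⟩ : {b : I // b < p})
        rw [← hS] at h'
        exact h'
      rw [himpb _ hmltp] at this
      exact absurd this (not_le.mpr hSm)
  -- `p < imp t p` via the Łukasiewicz block
  have htmem : t ∈ Set.Icc p q := ⟨hpt.le, htq.le⟩
  have hpmem : p ∈ Set.Icc p q := ⟨le_rfl, hpq.le⟩
  have hgt0 : 0 < g t := by rw [← hgp]; exact hgmono hpmem htmem hpt
  have hgt1 : g t < 1 := by rw [← hgq]; exact hgmono htmem ⟨hpq.le, le_rfl⟩ htq
  have hlt : p < imp t p := by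
    obtain ⟨c, hcmem, hgc⟩ : ∃ c ∈ Set.Icc p q, g c = 1 - g t := by
      have : (1 - g t) ∈ Set.Icc (0:ℝ) 1 := ⟨by linarith, by linarith⟩
      rw [← hgsurj] at this
      obtain ⟨c, hc, hc'⟩ := this
      exact ⟨c, hc, hc'⟩
    have hmulmem : mul t c ∈ Set.Icc p q := by
      constructor
      · calc p = mul p p := hp.symm
        _ ≤ mul p c := hmono p hcmem.1
        _ ≤ mul t c := hmono' _ p t hpt.le
      · exact (hmul_le_left t c).trans hcmem.2
    have hgm : g (mul t c) = 0 := by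
      rw [hghom t htmem c hcmem, hgc]
      simp
    have hmtc : mul t c = p := hgmono.injOn hmulmem hpmem (by rw [hgm, hgp])
    have hc_le : c ≤ imp t p := (hadj t c p).mp (le_of_eq hmtc)
    have hpc : p < c := by
      rcases lt_or_ge p c with h | h
      · exact h
      · exfalso
        have : g c ≤ g p := by
          rcases eq_or_lt_of_le h with h' | h'
          · rw [h']
          · exact (hgmono hcmem hpmem h').le
        rw [hgp, hgc] at this
        linarith
    exact hpc.trans_le hc_le
  refine ⟨hsup, hlt, ?_⟩
  -- the failure of the inequality: evaluate the infimum at `x = t`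
  intro h
  have h1 : imp t t = 1 := by
    refine le_antisymm le_one' ((hadj t 1 t).mp ?_)
    rw [hcomm, hunit]
  have h2 : imp 1 p = p := by
    refine le_antisymm ?_ ((hadj 1 p p).mp (le_of_eq (hunit p)))
    have := himp_le 1 p
    rwa [hunit] at this
  have h3 : imp t p ≤ imp (imp t t) (⨆ b : {b : I // b < p}, imp t b) :=
    h.trans (iInf_le _ t)
  rw [h1, hsup, h2] at h3
  exact absurd h3 (not_le.mpr hlt)
end
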